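/- Let a, b, ν ∈ ℝ³ be such that the matrix F = [a b ν] (with columns a, b, ν) is invertible, and let P ∈ ℝ³ˣ³. If the nine conditions ⟨P·Anti(ν)ᵀ, a⊗a⟩ = 0, ⟨P·Anti(ν)ᵀ, b⊗b⟩ = 0, ⟨P·Anti(ν)ᵀ, sym(a⊗b)⟩ = 0, ⟨P·Anti(ν)ᵀ, sym(a⊗ν)⟩ = 0, ⟨P·Anti(ν)ᵀ, sym(b⊗ν)⟩ = 0, ⟨P, b⊗(a×ν) − a⊗(b×ν)⟩ = 0, ⟨P, a⊗ν⟩ = 0, ⟨P, b⊗ν⟩ = 0 and ⟨P, ν⊗ν⟩ = 0 all hold, then P = 0. That is, these nine linear functionals determine a 3×3 matrix uniquely. -/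
import Mathlib


open Matrix

/-- Symmetric part of a 3×3 matrix: `sym M = (M + Mᵀ)/2`. -/
noncomputable def symM (M : Matrix (Fin 3) (Fin 3) ℝ) : Matrix (Fin 3) (Fin 3) ℝ :=
  (1 / 2 : ℝ) • (M + Mᵀ)

/-- The skew-symmetric matrix `Anti ν` with `Anti ν · w = ν × w`. -/
def AntiM (v : Fin 3 → ℝ) : Matrix (Fin 3) (Fin 3) ℝ :=
  !![0, -v 2, v 1; v 2, 0, -v 0; -v 1, v 0, 0]

/-- Frobenius inner product `⟨A,B⟩ = ∑ᵢⱼ Aᵢⱼ Bᵢⱼ`. -/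
def finner (A B : Matrix (Fin 3) (Fin 3) ℝ) : ℝ := ∑ i, ∑ j, A i j * B i j

/-- Outer (dyadic) product `a ⊗ b`. -/
def outer (a b : Fin 3 → ℝ) : Matrix (Fin 3) (Fin 3) ℝ := Matrix.of fun i j => a i * b j

private lemma fin3_mk2 (h : 2 < 3) : (⟨2, h⟩ : Fin 3) = 2 := rfl

private lemma sum_sq_zero {x y z : ℝ} (h : x ^ 2 + y ^ 2 + z ^ 2 = 0) :
    x = 0 ∧ y = 0 ∧ z = 0 := by
  refine ⟨?_, ?_, ?_⟩ <;> nlinarith [sq_nonneg x, sq_nonneg y, sq_nonneg z]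

private lemma cancel_left' (F M : Matrix (Fin 3) (Fin 3) ℝ) (h : IsUnit F.det)
    (hM : F * M = 0) : M = 0 := by
  have := congrArg (fun X => F⁻¹ * X) hM
  simpa [Matrix.nonsing_inv_mul_cancel_left F M h] using this

private lemma cancel_right' (G M : Matrix (Fin 3) (Fin 3) ℝ) (h : IsUnit G.det)
    (hM : M * G = 0) : M = 0 := by
  have := congrArg (fun X => X * G⁻¹) hM
  simpa [Matrix.mul_nonsing_inv_cancel_right G M h] using this

private lemma cancel_both' (F G M : Matrix (Fin 3) (Fin 3) ℝ) (hF : IsUnit F.det)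
    (hG : IsUnit G.det) (hM : F * M * G = 0) : M = 0 :=
  cancel_left' F M hF (cancel_right' G (F * M) hG hM)

set_option maxHeartbeats 1000000 in
/-- If `F = [a b ν]` is invertible, then the five face-trace conditions together with
the four kernel conditions determine `P ∈ ℝ³ˣ³` uniquely: they force `P = 0`. -/
theorem nine_conditions_determine_matrix (a b ν : Fin 3 → ℝ)
    (P : Matrix (Fin 3) (Fin 3) ℝ)
    (hF : IsUnit (Matrix.of fun i j => ![a, b, ν] j i : Matrix (Fin 3) (Fin 3) ℝ))
    (h1 : finner (P * (AntiM ν)ᵀ) (outer a a) = 0)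
    (h2 : finner (P * (AntiM ν)ᵀ) (outer b b) = 0)
    (h3 : finner (P * (AntiM ν)ᵀ) (symM (outer a b)) = 0)
    (h4 : finner (P * (AntiM ν)ᵀ) (symM (outer a ν)) = 0)
    (h5 : finner (P * (AntiM ν)ᵀ) (symM (outer b ν)) = 0)
    (h6 : finner P (outer b (crossProduct a ν) - outer a (crossProduct b ν)) = 0)
    (h7 : finner P (outer a ν) = 0)
    (h8 : finner P (outer b ν) = 0)
    (h9 : finner P (outer ν ν) = 0) :
    P = 0 := by
  -- scalar-expand all hypotheses
  simp only [finner, Fin.sum_univ_three, Matrix.mul_apply, symM, AntiM, outer,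
    Matrix.of_apply, Matrix.transpose_apply, Matrix.sub_apply, Matrix.add_apply,
    Matrix.smul_apply, cross_apply, Matrix.cons_val', Matrix.cons_val_zero,
    Matrix.cons_val_one, Matrix.head_cons, Matrix.empty_val', Matrix.cons_val_fin_one,
    Matrix.head_fin_const, Matrix.cons_val_two, Matrix.tail_cons, smul_eq_mul] at h1 h2 h3 h4 h5 h6 h7 h8 h9
  set F : Matrix (Fin 3) (Fin 3) ℝ := Matrix.of fun i j => ![a, b, ν] j i with hFdef
  have hdet : IsUnit F.det := (Matrix.isUnit_iff_isUnit_det F).mp hF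
  have hdetT : IsUnit Fᵀ.det := by rwa [Matrix.det_transpose]
  set K : Matrix (Fin 3) (Fin 3) ℝ := P * AntiM ν with hKdef
  -- Step 1: symmetric part of K vanishes
  have hTF : Fᵀ * (K + Kᵀ) * F = 0 := by
    ext i j
    fin_cases i <;> fin_cases j <;>
      simp only [hFdef, hKdef, Matrix.mul_apply, Fin.sum_univ_three, Matrix.of_apply,
        Matrix.transpose_apply, Matrix.add_apply, AntiM, Matrix.zero_apply,
        Matrix.cons_val', Matrix.cons_val_zero, Matrix.cons_val_one, Matrix.head_cons,
        Matrix.empty_val', Matrix.cons_val_fin_one, Matrix.head_fin_const,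
        Matrix.cons_val_two, Matrix.tail_cons, Fin.mk_zero, Fin.mk_one, fin3_mk2]
    · linear_combination (-2 : ℝ) * h1
    · linear_combination (-2 : ℝ) * h3
    · linear_combination (-2 : ℝ) * h4
    · linear_combination (-2 : ℝ) * h3
    · linear_combination (-2 : ℝ) * h2
    · linear_combination (-2 : ℝ) * h5
    · linear_combination (-2 : ℝ) * h4
    · linear_combination (-2 : ℝ) * h5
    · ring
  have hT0 : K + Kᵀ = 0 := cancel_both' Fᵀ F _ hdetT hdet hTF
  have hTe : ∀ i j, K i j + K j i = 0 := by
    intro i j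
    have := congrFun (congrFun hT0 i) j
    simpa using this
  have hT00 := hTe 0 0; have hT11 := hTe 1 1; have hT22 := hTe 2 2
  have hT01 := hTe 0 1; have hT02 := hTe 0 2; have hT12 := hTe 1 2
  simp only [hKdef, Matrix.mul_apply, Fin.sum_univ_three, AntiM, Matrix.cons_val',
    Matrix.cons_val_zero, Matrix.cons_val_one, Matrix.head_cons, Matrix.empty_val',
    Matrix.cons_val_fin_one, Matrix.head_fin_const, Matrix.cons_val_two, Matrix.tail_cons,
    Matrix.of_apply] at hT00 hT11 hT22 hT01 hT02 hT12
  -- Step 2: K itself vanishes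
  have hKF : Fᵀ * K * F = 0 := by
    ext i j
    fin_cases i <;> fin_cases j <;>
      simp only [hFdef, hKdef, Matrix.mul_apply, Fin.sum_univ_three, Matrix.of_apply,
        Matrix.transpose_apply, AntiM, Matrix.zero_apply,
        Matrix.cons_val', Matrix.cons_val_zero, Matrix.cons_val_one, Matrix.head_cons,
        Matrix.empty_val', Matrix.cons_val_fin_one, Matrix.head_fin_const,
        Matrix.cons_val_two, Matrix.tail_cons, Fin.mk_zero, Fin.mk_one, fin3_mk2]
    · linear_combination (a 0 * a 0) * hT00 + (a 1 * a 1) * hT11 + (a 2 * a 2) * hT22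
        + (a 0 * a 1) * hT01 + (a 0 * a 2) * hT02 + (a 1 * a 2) * hT12
        - (1/2 : ℝ) * ((a 0 * a 0) * hT00 + (a 1 * a 1) * hT11 + (a 2 * a 2) * hT22)
    · linear_combination (1/2 : ℝ) * h6 + (1/2 : ℝ) * ((a 0 * b 0) * hT00
        + (a 1 * b 1) * hT11 + (a 2 * b 2) * hT22 + (a 0 * b 1 + a 1 * b 0) * hT01
        + (a 0 * b 2 + a 2 * b 0) * hT02 + (a 1 * b 2 + a 2 * b 1) * hT12)
    · ring
    · linear_combination (-1/2 : ℝ) * h6 + (1/2 : ℝ) * ((a 0 * b 0) * hT00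
        + (a 1 * b 1) * hT11 + (a 2 * b 2) * hT22 + (a 0 * b 1 + a 1 * b 0) * hT01
        + (a 0 * b 2 + a 2 * b 0) * hT02 + (a 1 * b 2 + a 2 * b 1) * hT12)
    · linear_combination (1/2 : ℝ) * ((b 0 * b 0) * hT00 + (b 1 * b 1) * hT11
        + (b 2 * b 2) * hT22) + (b 0 * b 1) * hT01 + (b 0 * b 2) * hT02 + (b 1 * b 2) * hT12
    · ring
    · linear_combination (ν 0 * a 0) * hT00 + (ν 1 * a 1) * hT11 + (ν 2 * a 2) * hT22
        + (ν 0 * a 1 + ν 1 * a 0) * hT01 + (ν 0 * a 2 + ν 2 * a 0) * hT02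
        + (ν 1 * a 2 + ν 2 * a 1) * hT12
    · linear_combination (ν 0 * b 0) * hT00 + (ν 1 * b 1) * hT11 + (ν 2 * b 2) * hT22
        + (ν 0 * b 1 + ν 1 * b 0) * hT01 + (ν 0 * b 2 + ν 2 * b 0) * hT02
        + (ν 1 * b 2 + ν 2 * b 1) * hT12
    · ring
  have hK0 : K = 0 := cancel_both' Fᵀ F _ hdetT hdet hKF
  have hKe : ∀ i j, K i j = 0 := by
    intro i j; have := congrFun (congrFun hK0 i) j; simpa using this
  have hK00 := hKe 0 0; have hK01 := hKe 0 1; have hK02 := hKe 0 2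
  have hK10 := hKe 1 0; have hK11 := hKe 1 1; have hK12 := hKe 1 2
  have hK20 := hKe 2 0; have hK21 := hKe 2 1; have hK22 := hKe 2 2
  simp only [hKdef, Matrix.mul_apply, Fin.sum_univ_three, AntiM, Matrix.cons_val',
    Matrix.cons_val_zero, Matrix.cons_val_one, Matrix.head_cons, Matrix.empty_val',
    Matrix.cons_val_fin_one, Matrix.head_fin_const, Matrix.cons_val_two, Matrix.tail_cons,
    Matrix.of_apply] at hK00 hK01 hK02 hK10 hK11 hK12 hK20 hK21 hK22
  -- Step 3: P * G = 0 for the invertible matrix G = [ν×a  ν×b  ν]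
  set G : Matrix (Fin 3) (Fin 3) ℝ :=
    !![ν 1 * a 2 - ν 2 * a 1, ν 1 * b 2 - ν 2 * b 1, ν 0;
       ν 2 * a 0 - ν 0 * a 2, ν 2 * b 0 - ν 0 * b 2, ν 1;
       ν 0 * a 1 - ν 1 * a 0, ν 0 * b 1 - ν 1 * b 0, ν 2] with hGdef
  have hFPG : Fᵀ * (P * G) = 0 := by
    rw [← Matrix.mul_assoc]
    ext i j
    fin_cases i <;> fin_cases j <;>
      simp only [hFdef, hGdef, Matrix.mul_apply, Fin.sum_univ_three, Matrix.of_apply,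
        Matrix.transpose_apply, Matrix.zero_apply,
        Matrix.cons_val', Matrix.cons_val_zero, Matrix.cons_val_one, Matrix.head_cons,
        Matrix.empty_val', Matrix.cons_val_fin_one, Matrix.head_fin_const,
        Matrix.cons_val_two, Matrix.tail_cons, Fin.mk_zero, Fin.mk_one, fin3_mk2]
    · linear_combination (a 0 * a 0) * hK00 + (a 0 * a 1) * hK01 + (a 0 * a 2) * hK02 + (a 1 * a 0) * hK10 + (a 1 * a 1) * hK11 + (a 1 * a 2) * hK12 + (a 2 * a 0) * hK20 + (a 2 * a 1) * hK21 + (a 2 * a 2) * hK22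
    · linear_combination (a 0 * b 0) * hK00 + (a 0 * b 1) * hK01 + (a 0 * b 2) * hK02 + (a 1 * b 0) * hK10 + (a 1 * b 1) * hK11 + (a 1 * b 2) * hK12 + (a 2 * b 0) * hK20 + (a 2 * b 1) * hK21 + (a 2 * b 2) * hK22
    · linear_combination h7
    · linear_combination (b 0 * a 0) * hK00 + (b 0 * a 1) * hK01 + (b 0 * a 2) * hK02 + (b 1 * a 0) * hK10 + (b 1 * a 1) * hK11 + (b 1 * a 2) * hK12 + (b 2 * a 0) * hK20 + (b 2 * a 1) * hK21 + (b 2 * a 2) * hK22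
    · linear_combination (b 0 * b 0) * hK00 + (b 0 * b 1) * hK01 + (b 0 * b 2) * hK02 + (b 1 * b 0) * hK10 + (b 1 * b 1) * hK11 + (b 1 * b 2) * hK12 + (b 2 * b 0) * hK20 + (b 2 * b 1) * hK21 + (b 2 * b 2) * hK22
    · linear_combination h8
    · linear_combination (ν 0 * a 0) * hK00 + (ν 0 * a 1) * hK01 + (ν 0 * a 2) * hK02 + (ν 1 * a 0) * hK10 + (ν 1 * a 1) * hK11 + (ν 1 * a 2) * hK12 + (ν 2 * a 0) * hK20 + (ν 2 * a 1) * hK21 + (ν 2 * a 2) * hK22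
    · linear_combination (ν 0 * b 0) * hK00 + (ν 0 * b 1) * hK01 + (ν 0 * b 2) * hK02 + (ν 1 * b 0) * hK10 + (ν 1 * b 1) * hK11 + (ν 1 * b 2) * hK12 + (ν 2 * b 0) * hK20 + (ν 2 * b 1) * hK21 + (ν 2 * b 2) * hK22
    · linear_combination h9
  have hPG : P * G = 0 := cancel_left' Fᵀ (P * G) hdetT hFPG
  -- Step 4: G is invertible
  have hdF : F.det ≠ 0 := hdet.ne_zero
  have hdFs : a 0 * (b 1 * ν 2 - b 2 * ν 1) - b 0 * (a 1 * ν 2 - a 2 * ν 1)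
      + ν 0 * (a 1 * b 2 - a 2 * b 1) ≠ 0 := by
    intro h; apply hdF
    rw [hFdef, Matrix.det_fin_three]
    simp only [Matrix.of_apply, Matrix.cons_val', Matrix.cons_val_zero, Matrix.cons_val_one,
      Matrix.head_cons, Matrix.empty_val', Matrix.cons_val_fin_one, Matrix.head_fin_const,
      Matrix.cons_val_two, Matrix.tail_cons, Fin.mk_zero, Fin.mk_one, fin3_mk2]
    linear_combination h
  have hνs : ν 0 ^ 2 + ν 1 ^ 2 + ν 2 ^ 2 ≠ 0 := by
    intro h; apply hdFs
    obtain ⟨e0, e1, e2⟩ := sum_sq_zero h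
    rw [e0, e1, e2]; ring
  have hGdet : IsUnit G.det := by
    rw [isUnit_iff_ne_zero]
    intro hG0
    apply mul_ne_zero hdFs hνs
    rw [hGdef, Matrix.det_fin_three] at hG0
    simp only [Matrix.cons_val', Matrix.cons_val_zero, Matrix.cons_val_one,
      Matrix.head_cons, Matrix.empty_val', Matrix.cons_val_fin_one, Matrix.head_fin_const,
      Matrix.cons_val_two, Matrix.tail_cons, Matrix.of_apply, Fin.mk_zero, Fin.mk_one,
      fin3_mk2] at hG0
    linear_combination hG0
  exact cancel_right' G P hGdet hPG
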